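/- arXiv:2604.21799 — 2 statements merged into one kernel-verified Lean document; each statement's English description precedes it below -/
import Mathlib

section
/- If P : [0,T] → S^n solves the backward Riccati differential equation Ṗ + P(A+B) + (A+B)ᵀP - QᵀQ - γ⁻²PB₁B₁ᵀP = 0 with P(T) = 0, and η : [0,T] → R^n solves η̇ + [A + B - γ⁻²B₁B₁ᵀP]ᵀη + Pσ = 0 with η(T) = 0, then along any solution x of ẋ = (A+B)x + B₁v + σ, the functional ∫₀ᵀ [γ²|v|² - ⟨QᵀQ x, x⟩] dt equals ⟨P(0)x(0), x(0)⟩ + 2⟨η(0), x(0)⟩ + ∫₀ᵀ [γ²|v + γ⁻²B₁ᵀ(Px + η)|² + 2⟨η, σ⟩ - γ⁻²|B₁ᵀη|²] dt. -/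
/-!
Let `V t = ⟨P t x t, x t⟩ + 2⟨η t, x t⟩`. Along the trajectory, the Riccati equation for `P`
and the adjoint equation for `η` turn `V̇` into the difference of the two integrands once the
square in `v` is completed. Integrating over `[0, T]` and using `V T = 0` gives the identity.
-/

open Matrix

section Algebra

variable {ι κ R : Type*} [Fintype ι] [Fintype κ] [CommRing R]

lemma mulVec_dotProduct_eq_dotProduct_transpose_mulVec (M : Matrix ι κ R) (w : κ → R)
    (u : ι → R) : M *ᵥ w ⬝ᵥ u = w ⬝ᵥ Mᵀ *ᵥ u := by
  rw [dotProduct_mulVec, vecMul_transpose]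

lemma quadForm_of_riccati {p p' a r : Matrix ι ι R} {b : Matrix ι κ R} {c : R} (hp : pᵀ = p)
    (hric : p' + p * a + aᵀ * p - r - c • (p * b * bᵀ * p) = 0) (y : ι → R) :
    p' *ᵥ y ⬝ᵥ y + 2 * (p *ᵥ y ⬝ᵥ a *ᵥ y) =
      r *ᵥ y ⬝ᵥ y + c * (bᵀ *ᵥ (p *ᵥ y) ⬝ᵥ bᵀ *ᵥ (p *ᵥ y)) := by
  have hpa : (p * a) *ᵥ y ⬝ᵥ y = p *ᵥ y ⬝ᵥ a *ᵥ y := by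
    rw [← mulVec_mulVec, mulVec_dotProduct_eq_dotProduct_transpose_mulVec, hp, dotProduct_comm]
  have hap : (aᵀ * p) *ᵥ y ⬝ᵥ y = p *ᵥ y ⬝ᵥ a *ᵥ y := by
    rw [← mulVec_mulVec, mulVec_dotProduct_eq_dotProduct_transpose_mulVec, transpose_transpose]
  have hpbbp : (p * b * bᵀ * p) *ᵥ y ⬝ᵥ y = bᵀ *ᵥ (p *ᵥ y) ⬝ᵥ bᵀ *ᵥ (p *ᵥ y) := by
    rw [Matrix.mul_assoc, Matrix.mul_assoc, ← mulVec_mulVec,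
      mulVec_dotProduct_eq_dotProduct_transpose_mulVec, hp, ← mulVec_mulVec, ← mulVec_mulVec,
      mulVec_dotProduct_eq_dotProduct_transpose_mulVec, dotProduct_comm]
  have h := congrArg (· *ᵥ y ⬝ᵥ y) hric
  simp only [add_mulVec, sub_mulVec, smul_mulVec, add_dotProduct, sub_dotProduct,
    smul_dotProduct, smul_eq_mul, zero_mulVec, zero_dotProduct, hpa, hap, hpbbp] at h
  linear_combination h

lemma linearForm_of_costate {p a : Matrix ι ι R} {b : Matrix ι κ R} {c : R} {e e' s : ι → R}
    (hp : pᵀ = p) (heq : e' + (a - c • (b * bᵀ * p))ᵀ *ᵥ e + p *ᵥ s = 0) (y : ι → R) :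
    e' ⬝ᵥ y + e ⬝ᵥ a *ᵥ y = c * (bᵀ *ᵥ (p *ᵥ y) ⬝ᵥ bᵀ *ᵥ e) - s ⬝ᵥ p *ᵥ y := by
  have hbbp : e ⬝ᵥ (b * bᵀ * p) *ᵥ y = bᵀ *ᵥ (p *ᵥ y) ⬝ᵥ bᵀ *ᵥ e := by
    rw [Matrix.mul_assoc, ← mulVec_mulVec, ← mulVec_mulVec, dotProduct_comm,
      mulVec_dotProduct_eq_dotProduct_transpose_mulVec]
  have h := congrArg (· ⬝ᵥ y) heq
  simp only [add_dotProduct, zero_dotProduct] at h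
  rw [mulVec_dotProduct_eq_dotProduct_transpose_mulVec _ e y, transpose_transpose, sub_mulVec,
    smul_mulVec, dotProduct_sub, dotProduct_smul, smul_eq_mul, hbbp,
    mulVec_dotProduct_eq_dotProduct_transpose_mulVec p s y, hp] at h
  linear_combination h

variable {𝕜 : Type*} [Field 𝕜]

lemma completion_of_squares {p p' a r : Matrix ι ι 𝕜} {b : Matrix ι κ 𝕜} {g : 𝕜} (hg : g ≠ 0)
    {e e' s : ι → 𝕜} (hp : pᵀ = p)
    (hric : p' + p * a + aᵀ * p - r - g⁻¹ • (p * b * bᵀ * p) = 0)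
    (heq : e' + (a - g⁻¹ • (b * bᵀ * p))ᵀ *ᵥ e + p *ᵥ s = 0) (y : ι → 𝕜) (w : κ → 𝕜) :
    p' *ᵥ y ⬝ᵥ y + 2 * (p *ᵥ y ⬝ᵥ (a *ᵥ y + b *ᵥ w + s))
        + 2 * (e' ⬝ᵥ y + e ⬝ᵥ (a *ᵥ y + b *ᵥ w + s)) =
      g * ((w + g⁻¹ • bᵀ *ᵥ (p *ᵥ y + e)) ⬝ᵥ (w + g⁻¹ • bᵀ *ᵥ (p *ᵥ y + e)))
        + 2 * (e ⬝ᵥ s) - g⁻¹ * (bᵀ *ᵥ e ⬝ᵥ bᵀ *ᵥ e) - (g * (w ⬝ᵥ w) - r *ᵥ y ⬝ᵥ y) := by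
  have hpbw : p *ᵥ y ⬝ᵥ b *ᵥ w = w ⬝ᵥ bᵀ *ᵥ (p *ᵥ y) := by
    rw [dotProduct_comm, mulVec_dotProduct_eq_dotProduct_transpose_mulVec]
  have hebw : e ⬝ᵥ b *ᵥ w = w ⬝ᵥ bᵀ *ᵥ e := by
    rw [dotProduct_comm, mulVec_dotProduct_eq_dotProduct_transpose_mulVec]
  simp only [mulVec_add, dotProduct_add, add_dotProduct, smul_dotProduct, dotProduct_smul,
    smul_eq_mul, hpbw, hebw]
  rw [dotProduct_comm (bᵀ *ᵥ e) (bᵀ *ᵥ (p *ᵥ y)), dotProduct_comm (bᵀ *ᵥ (p *ᵥ y)) w,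
    dotProduct_comm (bᵀ *ᵥ e) w, dotProduct_comm (p *ᵥ y) s]
  linear_combination (norm := skip)
    quadForm_of_riccati hp hric y + 2 * linearForm_of_costate hp heq y
  field_simp
  ring

end Algebra

section Calculus

variable {ι : Type*} [Fintype ι] {t : ℝ}

lemma hasDerivAt_dotProduct {u w : ℝ → ι → ℝ} {u' w' : ι → ℝ}
    (hu : ∀ i, HasDerivAt (fun s => u s i) (u' i) t)
    (hw : ∀ i, HasDerivAt (fun s => w s i) (w' i) t) :
    HasDerivAt (fun s => u s ⬝ᵥ w s) (u' ⬝ᵥ w t + u t ⬝ᵥ w') t := by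
  have h : HasDerivAt (fun s => ∑ i, u s i * w s i) (∑ i, (u' i * w t i + u t i * w' i)) t :=
    HasDerivAt.fun_sum fun i _ => (hu i).mul (hw i)
  simpa only [dotProduct, Finset.sum_add_distrib] using h

lemma hasDerivAt_mulVec {κ : Type*} {M : ℝ → Matrix κ ι ℝ} {M' : Matrix κ ι ℝ}
    {u : ℝ → ι → ℝ} {u' : ι → ℝ} (hM : ∀ i j, HasDerivAt (fun s => M s i j) (M' i j) t)
    (hu : ∀ j, HasDerivAt (fun s => u s j) (u' j) t) (i : κ) :
    HasDerivAt (fun s => (M s *ᵥ u s) i) ((M' *ᵥ u t + M t *ᵥ u') i) t :=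
  hasDerivAt_dotProduct (hM i) hu

lemma hasDerivAt_quadForm {P : ℝ → Matrix ι ι ℝ} {P' : Matrix ι ι ℝ} {x : ℝ → ι → ℝ}
    {x' : ι → ℝ} (hsymm : (P t)ᵀ = P t) (hP : ∀ i j, HasDerivAt (fun s => P s i j) (P' i j) t)
    (hx : ∀ i, HasDerivAt (fun s => x s i) (x' i) t) :
    HasDerivAt (fun s => P s *ᵥ x s ⬝ᵥ x s) (P' *ᵥ x t ⬝ᵥ x t + 2 * (P t *ᵥ x t ⬝ᵥ x')) t := by
  convert hasDerivAt_dotProduct (hasDerivAt_mulVec hP hx) hx using 1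
  rw [add_dotProduct, mulVec_dotProduct_eq_dotProduct_transpose_mulVec (P t) x', hsymm,
    dotProduct_comm x']
  ring

lemma intervalIntegral_eq_sub_add_of_hasDerivAt {f g F F' : ℝ → ℝ} {a b : ℝ}
    (hF : ∀ t, HasDerivAt F (F' t) t) (hF' : ∀ t, F' t = g t - f t) (hf : Continuous f)
    (hg : Continuous g) : ∫ t in a..b, f t = F a - F b + ∫ t in a..b, g t := by
  have hftc : ∫ t in a..b, (g t - f t) = F b - F a :=
    intervalIntegral.integral_eq_sub_of_hasDerivAt (fun t _ => hF' t ▸ hF t)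
      ((hg.sub hf).intervalIntegrable a b)
  rw [intervalIntegral.integral_sub (hg.intervalIntegrable a b) (hf.intervalIntegrable a b)]
    at hftc
  linarith

end Calculus

theorem stmt2_general {n m : ℕ} (T γ : ℝ) (hγ : 0 < γ)
    (A B Q : ℝ → Matrix (Fin n) (Fin n) ℝ) (B₁ : ℝ → Matrix (Fin n) (Fin m) ℝ)
    (σ : ℝ → Fin n → ℝ) (v : ℝ → Fin m → ℝ) (x : ℝ → Fin n → ℝ)
    (hQ : Continuous Q)
    (hB₁ : Continuous B₁) (hσ : Continuous σ) (hv : Continuous v)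
    (P P' : ℝ → Matrix (Fin n) (Fin n) ℝ)
    (hPsymm : ∀ t, (P t)ᵀ = P t)
    (hPderiv : ∀ t, ∀ i j, HasDerivAt (fun s => P s i j) (P' t i j) t)
    (hPric : ∀ t, P' t + P t * (A t + B t) + (A t + B t)ᵀ * P t
      - (Q t)ᵀ * Q t - (γ ^ 2)⁻¹ • (P t * B₁ t * (B₁ t)ᵀ * P t) = 0)
    (hPT : P T = 0)
    (η η' : ℝ → Fin n → ℝ)
    (hηderiv : ∀ t, ∀ i, HasDerivAt (fun s => η s i) (η' t i) t)
    (hηeq : ∀ t, η' t + (A t + B t - (γ ^ 2)⁻¹ • (B₁ t * (B₁ t)ᵀ * P t))ᵀ.mulVec (η t)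
      + (P t).mulVec (σ t) = 0)
    (hηT : η T = 0)
    (hx : ∀ t, ∀ i, HasDerivAt (fun s => x s i)
      (((A t + B t).mulVec (x t) + (B₁ t).mulVec (v t) + σ t) i) t) :
    (∫ t in (0:ℝ)..T, (γ ^ 2 * dotProduct (v t) (v t)
        - dotProduct (((Q t)ᵀ * Q t).mulVec (x t)) (x t))) =
      dotProduct ((P 0).mulVec (x 0)) (x 0) + 2 * dotProduct (η 0) (x 0)
      + ∫ t in (0:ℝ)..T,
          (γ ^ 2 * dotProduct
              (v t + (γ ^ 2)⁻¹ • (B₁ t)ᵀ.mulVec ((P t).mulVec (x t) + η t))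
              (v t + (γ ^ 2)⁻¹ • (B₁ t)ᵀ.mulVec ((P t).mulVec (x t) + η t))
            + 2 * dotProduct (η t) (σ t)
            - (γ ^ 2)⁻¹ * dotProduct ((B₁ t)ᵀ.mulVec (η t)) ((B₁ t)ᵀ.mulVec (η t))) := by
  have hxc : Continuous x :=
    continuous_pi fun i => continuous_iff_continuousAt.2 fun t => (hx t i).continuousAt
  have hPc : Continuous P :=
    continuous_matrix fun i j => continuous_iff_continuousAt.2 fun t => (hPderiv t i j).continuousAt
  have hηc : Continuous η :=
    continuous_pi fun i => continuous_iff_continuousAt.2 fun t => (hηderiv t i).continuousAt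
  rw [intervalIntegral_eq_sub_add_of_hasDerivAt
    (fun t => (hasDerivAt_quadForm (hPsymm t) (hPderiv t) (hx t)).add
      ((hasDerivAt_dotProduct (hηderiv t) (hx t)).const_mul 2))
    (fun t => completion_of_squares (pow_ne_zero 2 hγ.ne') (hPsymm t) (hPric t) (hηeq t) (x t) (v t))
    (by fun_prop) (by fun_prop)]
  simp [hPT, hηT]

/-- Completion-of-squares identity: if `P` solves the backward Riccati equation
`Ṗ + P(A+B) + (A+B)ᵀP - QᵀQ - γ⁻²PB₁B₁ᵀP = 0`, `P(T) = 0`, and `η` solves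
`η̇ + [A+B-γ⁻²B₁B₁ᵀP]ᵀη + Pσ = 0`, `η(T) = 0`, then along any solution `x` of
`ẋ = (A+B)x + B₁v + σ`,
`∫₀ᵀ [γ²|v|² - ⟨QᵀQx,x⟩] dt = ⟨P(0)x(0),x(0)⟩ + 2⟨η(0),x(0)⟩
  + ∫₀ᵀ [γ²|v + γ⁻²B₁ᵀ(Px+η)|² + 2⟨η,σ⟩ - γ⁻²|B₁ᵀη|²] dt`. -/
theorem stmt2 {n m : ℕ} (T γ : ℝ) (hT : 0 < T) (hγ : 0 < γ)
    (A B Q : ℝ → Matrix (Fin n) (Fin n) ℝ) (B₁ : ℝ → Matrix (Fin n) (Fin m) ℝ)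
    (σ : ℝ → Fin n → ℝ) (v : ℝ → Fin m → ℝ) (x : ℝ → Fin n → ℝ)
    (hA : Continuous A) (hB : Continuous B) (hQ : Continuous Q)
    (hB₁ : Continuous B₁) (hσ : Continuous σ) (hv : Continuous v)
    (P P' : ℝ → Matrix (Fin n) (Fin n) ℝ)
    (hPsymm : ∀ t, (P t)ᵀ = P t)
    (hPderiv : ∀ t, ∀ i j, HasDerivAt (fun s => P s i j) (P' t i j) t)
    (hPric : ∀ t, P' t + P t * (A t + B t) + (A t + B t)ᵀ * P t
      - (Q t)ᵀ * Q t - (γ ^ 2)⁻¹ • (P t * B₁ t * (B₁ t)ᵀ * P t) = 0)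
    (hPT : P T = 0)
    (η η' : ℝ → Fin n → ℝ)
    (hηderiv : ∀ t, ∀ i, HasDerivAt (fun s => η s i) (η' t i) t)
    (hηeq : ∀ t, η' t + (A t + B t - (γ ^ 2)⁻¹ • (B₁ t * (B₁ t)ᵀ * P t))ᵀ.mulVec (η t)
      + (P t).mulVec (σ t) = 0)
    (hηT : η T = 0)
    (hx : ∀ t, ∀ i, HasDerivAt (fun s => x s i)
      (((A t + B t).mulVec (x t) + (B₁ t).mulVec (v t) + σ t) i) t) :
    (∫ t in (0:ℝ)..T, (γ ^ 2 * dotProduct (v t) (v t)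
        - dotProduct (((Q t)ᵀ * Q t).mulVec (x t)) (x t))) =
      dotProduct ((P 0).mulVec (x 0)) (x 0) + 2 * dotProduct (η 0) (x 0)
      + ∫ t in (0:ℝ)..T,
          (γ ^ 2 * dotProduct
              (v t + (γ ^ 2)⁻¹ • (B₁ t)ᵀ.mulVec ((P t).mulVec (x t) + η t))
              (v t + (γ ^ 2)⁻¹ • (B₁ t)ᵀ.mulVec ((P t).mulVec (x t) + η t))
            + 2 * dotProduct (η t) (σ t)
            - (γ ^ 2)⁻¹ * dotProduct ((B₁ t)ᵀ.mulVec (η t)) ((B₁ t)ᵀ.mulVec (η t))) :=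
  stmt2_general T γ hγ A B Q B₁ σ v x hQ hB₁ hσ hv P P' hPsymm hPderiv hPric hPT η η' hηderiv hηeq
    hηT hx
end

section
/- Let Σ : [0,T] → S^n solve Σ̇ = AΣ + ΣAᵀ + CCᵀ + DDᵀ - KHKᵀ with K = (ΣEᵀ + CFᵀ)H⁻¹ and H = FFᵀ, and suppose Σ(0) is positive semidefinite. Then Σ̇ can be rewritten as Σ̇ = (A - CF⁻¹E)Σ + Σ(A - CF⁻¹E)ᵀ - ΣEᵀH⁻¹EΣ + DDᵀ, and Σ(t) is positive semidefinite for all t ∈ [0,T]. -/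
/-!
Expanding `K H Kᵀ` with `H⁻¹ = F⁻ᵀ F⁻¹` gives the first identity, which can be put in the
Lyapunov form `Σ̇ = M Σ + Σ Mᵀ + Q` with `M = A - C F⁻¹ E - Σ Eᵀ H⁻¹ E` and
`Q = Σ Eᵀ H⁻¹ E Σ + D Dᵀ ⪰ 0`. For positivity, perturb to `Σ_ε(t) = Σ(t) + ε e^{ct} I`, where
`c = 2 c₁ + 1` and `c₁` bounds `|xᵀ M(t) x|` over unit vectors `x` and `t ∈ [0, T]`. If `Σ_ε`
first fails to be positive definite at `t₀ > 0` along a unit vector `x`, then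
`Σ(t₀) x = -ε e^{c t₀} x`, so the derivative of `xᵀ Σ_ε x` at `t₀` is at least `ε e^{c t₀} > 0`,
although this quadratic form is positive before `t₀` and vanishes at `t₀`. Letting `ε → 0`
gives `Σ(t) ⪰ 0`.
-/

open Matrix Set Filter Topology

section Riccati

variable {R : Type*} [CommRing R] {m k p : Type*} [Fintype m] [Fintype k] [Fintype p]
  [DecidableEq k]

theorem Matrix.mul_transpose_self_inv (F : Matrix k k R) : (F * Fᵀ)⁻¹ = F⁻¹ᵀ * F⁻¹ := by
  rw [Matrix.mul_inv_rev, transpose_nonsing_inv]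

theorem kalmanGain_mul_mul_transpose {S : Matrix m m R} {C : Matrix m k R} {E : Matrix k m R}
    {F : Matrix k k R} (hF : IsUnit F.det) :
    (S * Eᵀ + C * Fᵀ) * (F * Fᵀ)⁻¹ * (F * Fᵀ) * ((S * Eᵀ + C * Fᵀ) * (F * Fᵀ)⁻¹)ᵀ =
      (S * (F⁻¹ * E)ᵀ + C) * (S * (F⁻¹ * E)ᵀ + C)ᵀ := by
  have hG : (S * Eᵀ + C * Fᵀ) * (F * Fᵀ)⁻¹ = (S * (F⁻¹ * E)ᵀ + C) * F⁻¹ := by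
    rw [mul_transpose_self_inv, ← Matrix.mul_assoc, Matrix.add_mul, Matrix.mul_assoc C,
      ← transpose_mul, nonsing_inv_mul _ hF, transpose_one, Matrix.mul_one, Matrix.mul_assoc S,
      ← transpose_mul]
  have hF' : F⁻¹ * (F * Fᵀ) * F⁻¹ᵀ = 1 := by
    rw [← Matrix.mul_assoc, nonsing_inv_mul _ hF, Matrix.one_mul, ← transpose_mul,
      nonsing_inv_mul _ hF, transpose_one]
  rw [hG, transpose_mul _ F⁻¹]
  calc _ = (S * (F⁻¹ * E)ᵀ + C) * (F⁻¹ * (F * Fᵀ) * F⁻¹ᵀ) * (S * (F⁻¹ * E)ᵀ + C)ᵀ := by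
        simp only [Matrix.mul_assoc]
    _ = _ := by rw [hF', Matrix.mul_one]

theorem riccati_rhs_eq (A S : Matrix m m R) (C : Matrix m k R) (D : Matrix m p R)
    (E : Matrix k m R) {F : Matrix k k R} (hF : IsUnit F.det) (hS : Sᵀ = S) :
    A * S + S * Aᵀ + C * Cᵀ + D * Dᵀ -
        (S * Eᵀ + C * Fᵀ) * (F * Fᵀ)⁻¹ * (F * Fᵀ) * ((S * Eᵀ + C * Fᵀ) * (F * Fᵀ)⁻¹)ᵀ =
      (A - C * F⁻¹ * E) * S + S * (A - C * F⁻¹ * E)ᵀ - S * Eᵀ * (F * Fᵀ)⁻¹ * E * S +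
        D * Dᵀ := by
  rw [kalmanGain_mul_mul_transpose hF, mul_transpose_self_inv]
  simp only [transpose_add, transpose_sub, transpose_mul, transpose_transpose, hS,
    Matrix.add_mul, Matrix.mul_add, Matrix.sub_mul, Matrix.mul_sub, Matrix.mul_assoc]
  abel

theorem riccati_rhs_eq_lyapunov (N S : Matrix m m R) (D : Matrix m p R) (E : Matrix k m R)
    (F : Matrix k k R) (hS : Sᵀ = S) :
    N * S + S * Nᵀ - S * Eᵀ * (F * Fᵀ)⁻¹ * E * S + D * Dᵀ =
      (N - S * ((F⁻¹ * E)ᵀ * (F⁻¹ * E))) * S + S * (N - S * ((F⁻¹ * E)ᵀ * (F⁻¹ * E)))ᵀ +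
        ((F⁻¹ * E * S)ᵀ * (F⁻¹ * E * S) + D * Dᵀ) := by
  rw [mul_transpose_self_inv]
  simp only [transpose_sub, transpose_mul, transpose_transpose, hS, Matrix.sub_mul,
    Matrix.mul_sub, Matrix.mul_assoc]
  abel

end Riccati

theorem Continuous.matrix_inv {X 𝕜 : Type*} [TopologicalSpace X] [Field 𝕜] [TopologicalSpace 𝕜]
    [IsTopologicalRing 𝕜] [ContinuousInv₀ 𝕜] {k : Type*} [Fintype k] [DecidableEq k]
    {A : X → Matrix k k 𝕜} (hA : Continuous A) (h : ∀ x, IsUnit (A x).det) :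
    Continuous fun x => (A x)⁻¹ := by
  simp only [Matrix.inv_def, Ring.inverse_eq_inv']
  exact (hA.matrix_det.inv₀ fun x => (h x).ne_zero).smul hA.matrix_adjugate

theorem continuous_of_forall_hasDerivAt_apply {m n : Type*} {S S' : ℝ → Matrix m n ℝ}
    (h : ∀ t i j, HasDerivAt (fun s => S s i j) (S' t i j) t) : Continuous S :=
  continuous_matrix fun i j => continuous_iff_continuousAt.2 fun t => (h t i j).continuousAt

theorem HasDerivAt.nonpos_of_le_left {f : ℝ → ℝ} {f' a b : ℝ} (hf : HasDerivAt f f' b)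
    (hab : a < b) (h : ∀ s ∈ Ioo a b, f b ≤ f s) : f' ≤ 0 := by
  refine le_of_tendsto ((hasDerivAt_iff_tendsto_slope.mp hf).mono_left (nhdsLT_le_nhdsNE b)) ?_
  filter_upwards [Ioo_mem_nhdsLT hab] with s hs
  rw [slope_def_field]
  exact div_nonpos_of_nonneg_of_nonpos (sub_nonneg.2 (h s hs)) (sub_nonpos.2 hs.2.le)

theorem exists_first_nonpos {X : Type*} [TopologicalSpace X] {K : Set X} (hK : IsCompact K)
    {q : ℝ → X → ℝ} (hq : Continuous (Function.uncurry q)) (h0 : ∀ x ∈ K, 0 < q 0 x)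
    {t : ℝ} (ht : 0 ≤ t) {x : X} (hx : x ∈ K) (hqt : q t x ≤ 0) :
    ∃ t₀ ∈ Ioc 0 t, ∃ x₀ ∈ K, q t₀ x₀ ≤ 0 ∧ ∀ s ∈ Ico 0 t₀, ∀ y ∈ K, 0 < q s y := by
  set P := Icc 0 t ×ˢ K ∩ {z | Function.uncurry q z ≤ 0}
  have hP : IsCompact P := (isCompact_Icc.prod hK).inter_right (isClosed_le hq continuous_const)
  obtain ⟨⟨t₀, x₀⟩, ⟨⟨ht₀, hx₀⟩, hq₀⟩, hmin⟩ :=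
    hP.exists_isMinOn ⟨(t, x), ⟨⟨⟨ht, le_rfl⟩, hx⟩, hqt⟩⟩ continuous_fst.continuousOn
  have hfirst : ∀ s ∈ Ico 0 t₀, ∀ y ∈ K, 0 < q s y := fun s hs y hy => by
    by_contra! hsy
    exact (isMinOn_iff.1 hmin (s, y) ⟨⟨⟨hs.1, hs.2.le.trans ht₀.2⟩, hy⟩, hsy⟩).not_gt hs.2
  refine ⟨t₀, ⟨ht₀.1.lt_of_ne ?_, ht₀.2⟩, x₀, hx₀, hq₀, hfirst⟩
  rintro rfl
  exact (h0 x₀ hx₀).not_ge hq₀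

section Lyapunov

variable {m : Type*} [Fintype m]

theorem dotProduct_mul_add_mul_transpose_mulVec_of_mulVec_eq_smul {R : Type*} [CommRing R]
    {S M : Matrix m m R} {x : m → R} {μ : R} (hS : Sᵀ = S) (hx : S *ᵥ x = μ • x) :
    x ⬝ᵥ (M * S + S * Mᵀ) *ᵥ x = 2 * μ * (x ⬝ᵥ M *ᵥ x) := by
  have hxS : x ᵥ* S = μ • x := by rw [← mulVec_transpose, hS, hx]
  rw [add_mulVec, dotProduct_add, ← mulVec_mulVec, ← mulVec_mulVec, hx, dotProduct_mulVec x S,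
    hxS, mulVec_smul, dotProduct_smul, smul_dotProduct, dotProduct_mulVec x Mᵀ,
    vecMul_transpose, dotProduct_comm (M *ᵥ x)]
  ring

theorem hasDerivAt_dotProduct_mulVec {S : ℝ → Matrix m m ℝ} {S' : Matrix m m ℝ} {t : ℝ}
    (h : ∀ i j, HasDerivAt (fun s => S s i j) (S' i j) t) (x y : m → ℝ) :
    HasDerivAt (fun s => x ⬝ᵥ S s *ᵥ y) (x ⬝ᵥ S' *ᵥ y) t := by
  simp only [dotProduct, mulVec]
  exact HasDerivAt.fun_sum fun i _ =>
    (HasDerivAt.fun_sum fun j _ => (h i j).mul_const (y j)).const_mul (x i)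

theorem isCompact_setOf_dotProduct_self_eq_one : IsCompact {x : m → ℝ | x ⬝ᵥ x = 1} := by
  refine (isCompact_closedBall (0 : m → ℝ) 1).of_isClosed_subset
    (isClosed_eq (continuous_id.dotProduct continuous_id) continuous_const) fun x hx => ?_
  rw [mem_closedBall_zero_iff, pi_norm_le_iff_of_nonneg zero_le_one]
  intro i
  rw [Real.norm_eq_abs, abs_le_one_iff_mul_self_le_one, ← show x ⬝ᵥ x = 1 from hx]
  exact Finset.single_le_sum (fun j _ => mul_self_nonneg (x j)) (Finset.mem_univ i)

theorem dotProduct_mulVec_pos_of_forall_unit {M : Matrix m m ℝ}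
    (h : ∀ u : m → ℝ, u ⬝ᵥ u = 1 → 0 < u ⬝ᵥ M *ᵥ u) {x : m → ℝ} (hx : x ≠ 0) :
    0 < x ⬝ᵥ M *ᵥ x := by
  have hx2 : 0 < x ⬝ᵥ x := by simpa using dotProduct_self_star_pos_iff.2 hx
  set a := (√(x ⬝ᵥ x))⁻¹
  have ha : a * a = (x ⬝ᵥ x)⁻¹ := by rw [← mul_inv, Real.mul_self_sqrt hx2.le]
  have hunit := h (a • x) (by
    rw [smul_dotProduct, dotProduct_smul, smul_eq_mul, smul_eq_mul, ← mul_assoc, ha,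
      inv_mul_cancel₀ hx2.ne'])
  rw [mulVec_smul, smul_dotProduct, dotProduct_smul, smul_eq_mul, smul_eq_mul, ← mul_assoc,
    ha] at hunit
  exact pos_of_mul_pos_right hunit (inv_nonneg.2 hx2.le)

theorem posSemidef_of_forall_unit_pos_left {P : ℝ → Matrix m m ℝ} (hP : Continuous P) {a b : ℝ}
    (hab : a < b) (hsymm : (P b)ᵀ = P b)
    (h : ∀ s ∈ Ioo a b, ∀ u : m → ℝ, u ⬝ᵥ u = 1 → 0 < u ⬝ᵥ P s *ᵥ u) : (P b).PosSemidef := by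
  refine .of_dotProduct_mulVec_nonneg ((conjTranspose_eq_transpose_of_trivial _).trans hsymm)
    fun y => ?_
  rw [star_trivial]
  have hy : Continuous fun s => y ⬝ᵥ P s *ᵥ y :=
    continuous_const.dotProduct (hP.matrix_mulVec continuous_const)
  refine ge_of_tendsto ((hy.tendsto b).mono_left nhdsWithin_le_nhds : Tendsto _ (𝓝[<] b) _) ?_
  filter_upwards [Ioo_mem_nhdsLT hab] with s hs
  rcases eq_or_ne y 0 with rfl | hy0
  · simp
  · exact (dotProduct_mulVec_pos_of_forall_unit (h s hs) hy0).le

theorem dotProduct_lyapunov_mulVec_add_pos {S M Q : Matrix m m ℝ} {x : m → ℝ} {δ c₁ : ℝ}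
    (hS : Sᵀ = S) (hQ : Q.PosSemidef) (hδ : 0 < δ) (hSx : S *ᵥ x = -δ • x)
    (hM : |x ⬝ᵥ M *ᵥ x| ≤ c₁) :
    0 < x ⬝ᵥ (M * S + S * Mᵀ + Q) *ᵥ x + δ * (2 * c₁ + 1) := by
  have hQx : 0 ≤ x ⬝ᵥ Q *ᵥ x := by simpa using hQ.dotProduct_mulVec_nonneg x
  have hMx : 0 ≤ δ * (c₁ - x ⬝ᵥ M *ᵥ x) :=
    mul_nonneg hδ.le (sub_nonneg.2 ((le_abs_self _).trans hM))
  rw [add_mulVec, dotProduct_add,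
    dotProduct_mul_add_mul_transpose_mulVec_of_mulVec_eq_smul hS hSx]
  linarith

variable [DecidableEq m] {S S' M Q : ℝ → Matrix m m ℝ}

theorem dotProduct_mulVec_add_exp_smul_one_pos (hS : ∀ t, (S t)ᵀ = S t)
    (hS' : ∀ t i j, HasDerivAt (fun s => S s i j) (S' t i j) t)
    (hSeq : ∀ t, S' t = M t * S t + S t * (M t)ᵀ + Q t) (hQ : ∀ t, (Q t).PosSemidef)
    (h0 : (S 0).PosSemidef) {T c₁ : ℝ}
    (hc₁ : ∀ t ∈ Icc 0 T, ∀ x : m → ℝ, x ⬝ᵥ x = 1 → |x ⬝ᵥ M t *ᵥ x| ≤ c₁) {ε : ℝ} (hε : 0 < ε) :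
    ∀ t ∈ Icc 0 T, ∀ x : m → ℝ, x ⬝ᵥ x = 1 →
      0 < x ⬝ᵥ (S t + (ε * Real.exp ((2 * c₁ + 1) * t)) • 1) *ᵥ x := by
  set c := 2 * c₁ + 1
  set Sε : ℝ → Matrix m m ℝ := fun s => S s + (ε * Real.exp (c * s)) • 1
  have hSεc : Continuous Sε := (continuous_of_forall_hasDerivAt_apply hS').add
    ((by fun_prop : Continuous fun s => ε * Real.exp (c * s)).smul continuous_const)
  have hSε' : ∀ t i j, HasDerivAt (fun s => Sε s i j)
      ((S' t + (ε * Real.exp (c * t) * c) • 1) i j) t := fun t i j => by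
    simp only [Sε, Matrix.add_apply, Matrix.smul_apply, smul_eq_mul]
    exact (hS' t i j).add (((((hasDerivAt_id t).const_mul c).exp.const_mul ε).mul_const _)
      |>.congr_deriv (by simp only [id, mul_one]; ring))
  have hquad : ∀ s y, y ⬝ᵥ Sε s *ᵥ y = y ⬝ᵥ S s *ᵥ y + ε * Real.exp (c * s) * (y ⬝ᵥ y) := by
    intro s y
    simp [Sε, add_mulVec, dotProduct_add, smul_mulVec]
  intro t ht x hx
  by_contra! hneg
  obtain ⟨t₀, ht₀, x₀, hx₀, hq₀, hfirst⟩ := exists_first_nonpos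
    isCompact_setOf_dotProduct_self_eq_one (q := fun s y => y ⬝ᵥ Sε s *ᵥ y)
    (continuous_snd.dotProduct ((hSεc.comp continuous_fst).matrix_mulVec continuous_snd))
    (fun y hy => by
      rw [hquad, show y ⬝ᵥ y = 1 from hy]
      have := h0.dotProduct_mulVec_nonneg y
      simp only [star_trivial, mul_zero, Real.exp_zero, mul_one] at this ⊢
      linarith)
    ht.1 hx hneg
  have hpsd : (Sε t₀).PosSemidef := posSemidef_of_forall_unit_pos_left hSεc ht₀.1
    (by simp [Sε, hS]) fun s hs => hfirst s (Ioo_subset_Ico_self hs)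
  have hker : Sε t₀ *ᵥ x₀ = 0 := (hpsd.dotProduct_mulVec_zero_iff x₀).1 <| by
    simpa using le_antisymm hq₀ (by simpa using hpsd.dotProduct_mulVec_nonneg x₀)
  set δ := ε * Real.exp (c * t₀)
  have hSx : S t₀ *ᵥ x₀ = -δ • x₀ := by
    simp only [Sε, add_mulVec, smul_mulVec, one_mulVec] at hker
    rw [neg_smul, ← add_eq_zero_iff_eq_neg.1 hker]
  have hle := (hasDerivAt_dotProduct_mulVec (hSε' t₀) x₀ x₀).nonpos_of_le_left ht₀.1
    fun s hs => hq₀.trans (hfirst s ⟨hs.1.le, hs.2⟩ x₀ hx₀).le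
  have hpos := dotProduct_lyapunov_mulVec_add_pos (hS t₀) (hQ t₀) (by positivity) hSx
    (hc₁ t₀ ⟨ht₀.1.le, ht₀.2.trans ht.2⟩ x₀ hx₀)
  rw [add_mulVec, smul_mulVec, one_mulVec, dotProduct_add, dotProduct_smul, hx₀, hSeq] at hle
  simp only [smul_eq_mul, mul_one] at hle
  linarith

theorem posSemidef_of_hasDerivAt_eq_lyapunov (hS : ∀ t, (S t)ᵀ = S t)
    (hS' : ∀ t i j, HasDerivAt (fun s => S s i j) (S' t i j) t) (hM : Continuous M)
    (hSeq : ∀ t, S' t = M t * S t + S t * (M t)ᵀ + Q t) (hQ : ∀ t, (Q t).PosSemidef)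
    (h0 : (S 0).PosSemidef) {t : ℝ} (ht : 0 ≤ t) : (S t).PosSemidef := by
  obtain ⟨c₁, hc₁⟩ :=
    (isCompact_Icc.prod isCompact_setOf_dotProduct_self_eq_one).exists_bound_of_continuousOn
      (f := fun z : ℝ × (m → ℝ) => z.2 ⬝ᵥ M z.1 *ᵥ z.2)
      (continuous_snd.dotProduct ((hM.comp continuous_fst).matrix_mulVec continuous_snd)).continuousOn
  have hpert := fun ε (hε : 0 < ε) => dotProduct_mulVec_add_exp_smul_one_pos hS hS' hSeq hQ h0
    (T := t) (fun s hs x hx => hc₁ (s, x) ⟨hs, hx⟩) hε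
  refine .of_dotProduct_mulVec_nonneg ((conjTranspose_eq_transpose_of_trivial _).trans (hS t))
    fun x => ?_
  rw [star_trivial]
  rcases eq_or_ne x 0 with rfl | hx
  · simp
  have key : ∀ ε > 0, 0 < x ⬝ᵥ S t *ᵥ x + ε * (Real.exp ((2 * c₁ + 1) * t) * (x ⬝ᵥ x)) := by
    intro ε hε
    have := dotProduct_mulVec_pos_of_forall_unit (hpert ε hε t ⟨ht, le_rfl⟩) hx
    simpa [add_mulVec, dotProduct_add, smul_mulVec, mul_assoc] using this
  refine ge_of_tendsto (x := 𝓝[>] (0 : ℝ)) ?_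
    (eventually_nhdsWithin_of_forall fun ε hε => (key ε hε).le)
  exact tendsto_nhdsWithin_of_tendsto_nhds (Continuous.tendsto' (by fun_prop) _ _ (by simp))

end Lyapunov

theorem stmt7_general {n r p : ℕ} (T : ℝ)
    (A : ℝ → Matrix (Fin n) (Fin n) ℝ) (C : ℝ → Matrix (Fin n) (Fin r) ℝ)
    (D : ℝ → Matrix (Fin n) (Fin p) ℝ) (E : ℝ → Matrix (Fin r) (Fin n) ℝ)
    (F : ℝ → Matrix (Fin r) (Fin r) ℝ)
    (hA : Continuous A) (hC : Continuous C)
    (hE : Continuous E) (hF : Continuous F)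
    (hFinv : ∀ t, IsUnit (F t).det)
    (H : ℝ → Matrix (Fin r) (Fin r) ℝ) (hH : ∀ t, H t = F t * (F t)ᵀ)
    (Sg Sg' : ℝ → Matrix (Fin n) (Fin n) ℝ)
    (hSgsymm : ∀ t, (Sg t)ᵀ = Sg t)
    (hSgderiv : ∀ t, ∀ i j, HasDerivAt (fun s => Sg s i j) (Sg' t i j) t)
    (K : ℝ → Matrix (Fin n) (Fin r) ℝ)
    (hK : ∀ t, K t = (Sg t * (E t)ᵀ + C t * (F t)ᵀ) * (H t)⁻¹)
    (hSgeq : ∀ t, Sg' t = A t * Sg t + Sg t * (A t)ᵀ + C t * (C t)ᵀ + D t * (D t)ᵀ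
      - K t * H t * (K t)ᵀ)
    (hSg0 : (Sg 0).PosSemidef) :
    (∀ t, Sg' t = (A t - C t * (F t)⁻¹ * E t) * Sg t
        + Sg t * (A t - C t * (F t)⁻¹ * E t)ᵀ
        - Sg t * (E t)ᵀ * (H t)⁻¹ * E t * Sg t + D t * (D t)ᵀ) ∧
    (∀ t ∈ Set.Icc (0:ℝ) T, (Sg t).PosSemidef) := by
  have hrhs : ∀ t, Sg' t = (A t - C t * (F t)⁻¹ * E t) * Sg t
      + Sg t * (A t - C t * (F t)⁻¹ * E t)ᵀ
      - Sg t * (E t)ᵀ * (H t)⁻¹ * E t * Sg t + D t * (D t)ᵀ := fun t => by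
    rw [hSgeq t, hK t, hH t]
    exact riccati_rhs_eq _ _ _ _ _ (hFinv t) (hSgsymm t)
  set W := fun t => (F t)⁻¹ * E t
  have hW : Continuous W := (hF.matrix_inv hFinv).matrix_mul hE
  refine ⟨hrhs, fun t ht => posSemidef_of_hasDerivAt_eq_lyapunov hSgsymm hSgderiv
    (M := fun t => A t - C t * (F t)⁻¹ * E t - Sg t * ((W t)ᵀ * W t))
    (Q := fun t => (W t * Sg t)ᵀ * (W t * Sg t) + D t * (D t)ᵀ) ?_ (fun t => ?_) (fun t => ?_)
    hSg0 ht.1⟩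
  · exact (hA.sub ((hC.matrix_mul (hF.matrix_inv hFinv)).matrix_mul hE)).sub
      ((continuous_of_forall_hasDerivAt_apply hSgderiv).matrix_mul
        (hW.matrix_transpose.matrix_mul hW))
  · rw [hrhs t, hH t]
    exact riccati_rhs_eq_lyapunov _ _ _ _ _ (hSgsymm t)
  · simpa only [conjTranspose_eq_transpose_of_trivial] using
      (posSemidef_conjTranspose_mul_self (W t * Sg t)).add
        (posSemidef_self_mul_conjTranspose (D t))

/-- If `Σ` solves `Σ̇ = AΣ + ΣAᵀ + CCᵀ + DDᵀ - KHKᵀ` with `K = (ΣEᵀ + CFᵀ)H⁻¹`,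
`H = FFᵀ`, and `Σ(0)` is positive semidefinite, then the right-hand side can be
rewritten as `(A - CF⁻¹E)Σ + Σ(A - CF⁻¹E)ᵀ - ΣEᵀH⁻¹EΣ + DDᵀ`, and `Σ(t)` is
positive semidefinite for all `t ∈ [0,T]`. -/
theorem stmt7 {n r p : ℕ} (T : ℝ) (hT : 0 < T)
    (A : ℝ → Matrix (Fin n) (Fin n) ℝ) (C : ℝ → Matrix (Fin n) (Fin r) ℝ)
    (D : ℝ → Matrix (Fin n) (Fin p) ℝ) (E : ℝ → Matrix (Fin r) (Fin n) ℝ)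
    (F : ℝ → Matrix (Fin r) (Fin r) ℝ)
    (hA : Continuous A) (hC : Continuous C) (hD : Continuous D)
    (hE : Continuous E) (hF : Continuous F)
    (hFinv : ∀ t, IsUnit (F t).det)
    (H : ℝ → Matrix (Fin r) (Fin r) ℝ) (hH : ∀ t, H t = F t * (F t)ᵀ)
    (Sg Sg' : ℝ → Matrix (Fin n) (Fin n) ℝ)
    (hSgsymm : ∀ t, (Sg t)ᵀ = Sg t)
    (hSgderiv : ∀ t, ∀ i j, HasDerivAt (fun s => Sg s i j) (Sg' t i j) t)
    (K : ℝ → Matrix (Fin n) (Fin r) ℝ)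
    (hK : ∀ t, K t = (Sg t * (E t)ᵀ + C t * (F t)ᵀ) * (H t)⁻¹)
    (hSgeq : ∀ t, Sg' t = A t * Sg t + Sg t * (A t)ᵀ + C t * (C t)ᵀ + D t * (D t)ᵀ
      - K t * H t * (K t)ᵀ)
    (hSg0 : (Sg 0).PosSemidef) :
    (∀ t, Sg' t = (A t - C t * (F t)⁻¹ * E t) * Sg t
        + Sg t * (A t - C t * (F t)⁻¹ * E t)ᵀ
        - Sg t * (E t)ᵀ * (H t)⁻¹ * E t * Sg t + D t * (D t)ᵀ) ∧
    (∀ t ∈ Set.Icc (0:ℝ) T, (Sg t).PosSemidef) :=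
  stmt7_general T A C D E F hA hC hE hF hFinv H hH Sg Sg' hSgsymm hSgderiv K hK hSgeq hSg0
end
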